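/- Suppose (X_n) is strictly stationary and regularly varying with index α ∈ (0,2), n·P(|X_1|>a_n)→1, the large deviation condition (LD) holds for some (r_n) with r_n→∞ and r_n/n→0, k_n = ⌊n/r_n⌋ = o(n^t) for some 0 < t < 1, and (l_n) is a sequence of positive integers with l_n/n^q → 1 where q = (1/2)·min{ 1/α, (1−t)/(1+α) } (so l_n < r_n for large n). Then for every function f of class C_K^+, k_n · E| exp( − f(a_n^{−1} S_{r_n}) ) − exp( − f(a_n^{−1} S_{r_n − l_n}) ) | → 0 as n → ∞. -/

import Mathlib

open MeasureTheory Filter Set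
noncomputable section

def SlowlyVaryingAt (L : ℝ → ℝ) : Prop :=
  ∀ c : ℝ, 0 < c → Tendsto (fun x => L (c * x) / L x) atTop (nhds 1)

def RegVarOf {Ω : Type*} [MeasurableSpace Ω] (P : Measure Ω) (Y : Ω → ℝ) (α : ℝ) : Prop :=
  ∃ L : ℝ → ℝ, Measurable L ∧ (∀ x : ℝ, 0 < x → 0 < L x) ∧ SlowlyVaryingAt L ∧
    ∀ x : ℝ, 0 < x → (P {ω | x < |Y ω|}).toReal = x ^ (-α) * L x

def IsStationarySeq {Ω : Type*} [MeasurableSpace Ω] (P : Measure Ω) (X : ℕ → Ω → ℝ) : Prop :=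
  ∀ m : ℕ, Measure.map (fun ω => fun i : ℕ => X (i + m) ω) P
    = Measure.map (fun ω => fun i : ℕ => X i ω) P

def pS {Ω : Type*} (X : ℕ → Ω → ℝ) (m : ℕ) (ω : Ω) : ℝ := ∑ i ∈ Finset.range m, X i ω

def blockS {Ω : Type*} (X : ℕ → Ω → ℝ) (r k : ℕ) (ω : Ω) : ℝ :=
  ∑ i ∈ Finset.range r, X ((k - 1) * r + i) ω

def truncBlock {Ω : Type*} (X : ℕ → Ω → ℝ) (a : ℝ) (r : ℕ) (u : ℝ) (k : ℕ) (ω : Ω) : ℝ :=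
  if |blockS X r k ω| / a ≤ u then blockS X r k ω / a else 0

def nuDens (α cp cm : ℝ) (x : ℝ) : ℝ :=
  if 0 < x then cp * α * x ^ (-α - 1)
  else if x < 0 then cm * α * (-x) ^ (-α - 1) else 0

def nuMeasure (α cp cm : ℝ) : Measure ℝ :=
  MeasureTheory.volume.withDensity (fun x => ENNReal.ofReal (nuDens α cp cm x))

def pastSigma {Ω : Type*} (X : ℕ → Ω → ℝ) (j : ℕ) : MeasurableSpace Ω :=
  ⨆ i ∈ Set.Iic j, MeasurableSpace.comap (X i) inferInstance

def futureSigma {Ω : Type*} (X : ℕ → Ω → ℝ) (j : ℕ) : MeasurableSpace Ω :=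
  ⨆ i ∈ Set.Ici j, MeasurableSpace.comap (X i) inferInstance

def alphaDep {Ω : Type*} [MeasurableSpace Ω] (P : Measure Ω) (mA mB : MeasurableSpace Ω) : ℝ :=
  sSup {d : ℝ | ∃ A B : Set Ω, MeasurableSet[mA] A ∧ MeasurableSet[mB] B ∧
    d = |(P (A ∩ B)).toReal - (P A).toReal * (P B).toReal|}

def alphaMix {Ω : Type*} [MeasurableSpace Ω] (P : Measure Ω) (X : ℕ → Ω → ℝ) (m : ℕ) : ℝ :=
  ⨆ j : ℕ, alphaDep P (pastSigma X j) (futureSigma X (j + m))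

def rhoDep {Ω : Type*} [MeasurableSpace Ω] (P : Measure Ω) (mA mB : MeasurableSpace Ω) : ℝ :=
  sSup {d : ℝ | ∃ f g : Ω → ℝ, Measurable[mA] f ∧ Measurable[mB] g ∧
    MemLp f 2 P ∧ MemLp g 2 P ∧
    d = |(∫ ω, f ω * g ω ∂P) - (∫ ω, f ω ∂P) * (∫ ω, g ω ∂P)| /
      Real.sqrt ((∫ ω, (f ω) ^ 2 ∂P) * (∫ ω, (g ω) ^ 2 ∂P))}

def rhoMix {Ω : Type*} [MeasurableSpace Ω] (P : Measure Ω) (X : ℕ → Ω → ℝ) (m : ℕ) : ℝ :=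
  ⨆ j : ℕ, rhoDep P (pastSigma X j) (futureSigma X (j + m))

def CKplus (f : ℝ → ℝ) : Prop :=
  Continuous f ∧ (∀ x, 0 ≤ f x) ∧ (∃ M : ℝ, ∀ x, f x ≤ M) ∧
  (∃ r : ℝ, 0 < r ∧ ∀ x : ℝ, |x| ≤ r → f x = 0) ∧
  (∃ lp : ℝ, Tendsto f atTop (nhds lp)) ∧ (∃ lm : ℝ, Tendsto f atBot (nhds lm))


open scoped Topology
open ProbabilityTheory

/-!
Write `g = exp ∘ (-f)`: it is uniformly continuous, its oscillation is at most `1`, and it is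
constant on `[-R, R]` where `f` vanishes. Hence the integrand is at most `ε` on
`{|S_r| > ρ a_n}`, at most `1` on `{|S_r - S_{r-l}| > δ a_n}`, and `0` elsewhere. By (LD),
`k_n P(|S_r| > ρ a_n)` stays bounded, so the first event costs `O(ε)`. For the second, a union
bound over the `l_n` summands and stationarity give `k_n l_n P(|X_0| > δ a_n / l_n)`. A crude
Potter bound `P(|X_0| > y) ≤ C (x / y)^(1+α) P(|X_0| > x)`, which follows from slow variation
and the monotonicity of the tail, turns this into
`C δ^(-1-α) (k_n l_n^(2+α) / n) · n P(|X_0| > a_n)`, and this tends to `0` because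
`k_n = o(n^t)`, `l_n ~ n^q` and `t + q (2 + α) < 1`.
-/

theorem Continuous.uniformContinuous_of_tendsto_atTop_atBot {g : ℝ → ℝ} {a b : ℝ}
    (hg : Continuous g) (ha : Tendsto g atTop (𝓝 a)) (hb : Tendsto g atBot (𝓝 b)) :
    UniformContinuous g := by
  -- `φ` interpolates between the two limits, so that `g - φ` vanishes at infinity.
  set φ : ℝ → ℝ := fun x => b + (a - b) * projIcc (0 : ℝ) 1 zero_le_one x
  have hφ : UniformContinuous φ :=
    uniformContinuous_const.add ((uniformContinuous_subtype_val.comp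
      (LipschitzWith.projIcc zero_le_one).uniformContinuous).const_smul (a - b))
  have hφa : φ =ᶠ[atTop] fun _ => a := by
    filter_upwards [eventually_ge_atTop 1] with x hx
    simp [φ, projIcc_of_right_le _ hx]
  have hφb : φ =ᶠ[atBot] fun _ => b := by
    filter_upwards [eventually_le_atBot 0] with x hx
    simp [φ, projIcc_of_le_left _ hx]
  have hzero : Tendsto (fun x => g x - φ x) (cocompact ℝ) (𝓝 0) := by
    rw [cocompact_eq_atBot_atTop, tendsto_sup]
    exact ⟨by simpa using hb.sub (tendsto_const_nhds.congr' hφb.symm),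
      by simpa using ha.sub (tendsto_const_nhds.congr' hφa.symm)⟩
  simpa using ((hg.sub hφ.continuous).uniformContinuous_of_tendsto_cocompact hzero).add hφ

theorem tendsto_zero_of_forall_le_mul_add {u b : ℕ → ℝ} {B : ℝ} (hu : ∀ n, 0 ≤ u n)
    (hb : Tendsto b atTop (𝓝 B))
    (h : ∀ ε > 0, ∃ c : ℕ → ℝ, Tendsto c atTop (𝓝 0) ∧ ∀ n, u n ≤ ε * b n + c n) :
    Tendsto u atTop (𝓝 0) := by
  refine tendsto_order.2 ⟨fun η hη => Eventually.of_forall fun n => hη.trans_le (hu n),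
    fun η hη => ?_⟩
  set ε := η / (2 * (|B| + 1))
  have hε : 0 < ε := by positivity
  have hεB : ε * B < η := by
    calc ε * B ≤ ε * (|B| + 1) := by gcongr; linarith [le_abs_self B]
      _ = η / 2 := by simp only [ε]; field_simp
      _ < η := half_lt_self hη
  obtain ⟨c, hc, hle⟩ := h ε hε
  have hlim : Tendsto (fun n => ε * b n + c n) atTop (𝓝 (ε * B)) := by
    simpa using (hb.const_mul ε).add hc
  filter_upwards [hlim.eventually_lt_const hεB] with n hn
  exact (hle n).trans_lt hn

theorem tendsto_mul_rpow_div_natCast {k l : ℕ → ℝ} {t q s : ℝ}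
    (hk : Tendsto (fun n => k n / (n : ℝ) ^ t) atTop (𝓝 0))
    (hl : Tendsto (fun n => l n / (n : ℝ) ^ q) atTop (𝓝 1)) (hl0 : ∀ n, 0 ≤ l n)
    (h : t + q * s < 1) : Tendsto (fun n => k n * l n ^ s / n) atTop (𝓝 0) := by
  have hpow : Tendsto (fun n : ℕ => (n : ℝ) ^ (t + q * s - 1)) atTop (𝓝 0) :=
    ((tendsto_rpow_neg_atTop (y := -(t + q * s - 1)) (by linarith)).comp
      tendsto_natCast_atTop_atTop).congr fun n => by simp
  have hprod := (hk.mul (hl.rpow_const (p := s) (Or.inl one_ne_zero))).mul hpow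
  rw [zero_mul, zero_mul] at hprod
  refine hprod.congr' ?_
  filter_upwards [eventually_ne_atTop 0] with n hn
  have hn0 : (0 : ℝ) < n := by positivity
  rw [Real.div_rpow (hl0 n) (by positivity), ← Real.rpow_mul hn0.le, Real.rpow_sub hn0,
    Real.rpow_add hn0, Real.rpow_one]
  field_simp

theorem add_half_min_mul_lt_one {α t : ℝ} (hα : 0 < α) (ht : t < 1) :
    t + min (1 / α) ((1 - t) / (1 + α)) / 2 * (2 + α) < 1 := by
  have hmin : min (1 / α) ((1 - t) / (1 + α)) / 2 * (2 + α) ≤ (1 - t) / (1 + α) / 2 * (2 + α) := by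
    gcongr
    exact min_le_right _ _
  have : (1 - t) / (1 + α) / 2 * (2 + α) < 1 - t := by
    rw [div_div, div_mul_eq_mul_div, div_lt_iff₀ (by positivity)]
    nlinarith
  linarith

section RegularVariation

variable {T : ℝ → ℝ}

theorem exists_doubling_of_slowlyVaryingAt {L : ℝ → ℝ} {α : ℝ} (hL : SlowlyVaryingAt L)
    (hLpos : ∀ x, 0 < x → 0 < L x) (hTL : ∀ x, 0 < x → T x = x ^ (-α) * L x) :
    ∃ X₀ > 0, ∀ x, X₀ ≤ x → T x ≤ 2 ^ (1 + α) * T (2 * x) := by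
  obtain ⟨X₀, hX₀⟩ := eventually_atTop.1
    ((hL 2 two_pos).eventually_const_lt (by norm_num : (1 / 2 : ℝ) < 1))
  refine ⟨max X₀ 1, by positivity, fun x hx => ?_⟩
  have hx0 : 0 < x := one_pos.trans_le ((le_max_right _ _).trans hx)
  have hLx : L x ≤ 2 * L (2 * x) := by
    have h := hX₀ x ((le_max_left _ _).trans hx)
    rw [lt_div_iff₀ (hLpos x hx0)] at h
    linarith
  have h2α : (2 : ℝ) ^ (1 + α) * 2 ^ (-α) = 2 := by
    rw [← Real.rpow_add two_pos]; norm_num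
  rw [hTL x hx0, hTL (2 * x) (by positivity), Real.mul_rpow zero_le_two hx0.le]
  calc x ^ (-α) * L x ≤ x ^ (-α) * (2 * L (2 * x)) := by gcongr
    _ = 2 ^ (1 + α) * (2 ^ (-α) * x ^ (-α) * L (2 * x)) := by
      linear_combination (-(x ^ (-α) * L (2 * x))) * h2α

theorem Antitone.le_mul_rpow_mul_of_doubling (hT : Antitone T) (hT0 : ∀ x, 0 ≤ T x)
    {β X₀ : ℝ} (hβ : 0 ≤ β) (hX₀ : 0 < X₀) (hdbl : ∀ x, X₀ ≤ x → T x ≤ 2 ^ β * T (2 * x))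
    {x y : ℝ} (hy : X₀ ≤ y) (hyx : y ≤ x) : T y ≤ 2 ^ β * (x / y) ^ β * T x := by
  obtain ⟨n, hn⟩ := pow_unbounded_of_one_lt (x / y) one_lt_two
  induction n generalizing y with
  | zero =>
    have := (one_le_div (hX₀.trans_le hy)).2 hyx
    rw [pow_zero] at hn
    linarith
  | succ n ih =>
    have hy0 : 0 < y := hX₀.trans_le hy
    by_cases hxy : x ≤ 2 * y
    · have hone : 1 ≤ (x / y) ^ β := Real.one_le_rpow ((one_le_div hy0).2 hyx) hβ
      calc T y ≤ 2 ^ β * T (2 * y) := hdbl y hy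
        _ ≤ 2 ^ β * T x := by gcongr; exact hT hxy
        _ ≤ 2 ^ β * (x / y) ^ β * T x := by
          rw [mul_assoc]; gcongr; exact le_mul_of_one_le_left (hT0 x) hone
    · push Not at hxy
      have h2y := ih (by linarith) hxy.le
        (by rwa [div_mul_eq_div_div_swap, div_lt_iff₀ two_pos, ← pow_succ])
      have hxy2 : 2 * (x / (2 * y)) = x / y := by field_simp
      calc T y ≤ 2 ^ β * T (2 * y) := hdbl y hy
        _ ≤ 2 ^ β * (2 ^ β * (x / (2 * y)) ^ β * T x) := by gcongr
        _ = 2 ^ β * (x / y) ^ β * T x := by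
          rw [← mul_assoc (2 ^ β),
            ← Real.mul_rpow zero_le_two (div_nonneg (by linarith) (by linarith)), hxy2]

theorem Antitone.tendsto_atTop_of_tendsto_zero (hT : Antitone T) (hpos : ∀ x, 0 < T x)
    {a : ℕ → ℝ} (h : Tendsto (fun n => T (a n)) atTop (𝓝 0)) : Tendsto a atTop atTop :=
  tendsto_atTop.2 fun M =>
    (h.eventually_lt_const (hpos M)).mono fun _ hn => (hT.reflect_lt hn).le

end RegularVariation

section Probability

variable {Ω : Type*} [MeasurableSpace Ω] {P : Measure Ω}

theorem measureReal_lt_abs_le [IsFiniteMeasure P] (Y : Ω → ℝ) (x : ℝ) :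
    P.real {ω | x < |Y ω|} ≤ P.real {ω | x < Y ω} + P.real {ω | Y ω < -x} := by
  refine (measureReal_mono fun ω (hω : x < |Y ω|) => ?_).trans (measureReal_union_le _ _)
  rcases lt_abs.1 hω with h | h
  · exact Or.inl h
  · exact Or.inr (show Y ω < -x by linarith)

theorem integral_abs_sub_comp_div_le [IsFiniteMeasure P] {U V : Ω → ℝ}
    (hU : Measurable U) (hV : Measurable V) {g : ℝ → ℝ} {ε δ ρ R a : ℝ} (ha : 0 < a)
    (hε : 0 ≤ ε) (hρδ : ρ + δ ≤ R) (hg1 : ∀ x y, |g x - g y| ≤ 1)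
    (hgδ : ∀ x y, |x - y| ≤ δ → |g x - g y| ≤ ε) (hgR : ∀ z, |z| ≤ R → g z = g 0) :
    ∫ ω, |g (U ω / a) - g (V ω / a)| ∂P
      ≤ ε * P.real {ω | ρ * a < |U ω|} + P.real {ω | δ * a < |U ω - V ω|} := by
  set A := {ω | ρ * a < |U ω|}
  set B := {ω | δ * a < |U ω - V ω|}
  have hA : MeasurableSet A := measurableSet_lt measurable_const hU.abs
  have hB : MeasurableSet B := measurableSet_lt measurable_const (hU.sub hV).abs
  have hpt (ω : Ω) : |g (U ω / a) - g (V ω / a)|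
      ≤ A.indicator (fun _ => ε) ω + B.indicator (fun _ => (1 : ℝ)) ω := by
    have hAnn : 0 ≤ A.indicator (fun _ => ε) ω := indicator_nonneg (fun _ _ => hε) ω
    by_cases hωB : ω ∈ B
    · rw [indicator_of_mem hωB]
      exact (hg1 _ _).trans (le_add_of_nonneg_left hAnn)
    have hUV : |U ω / a - V ω / a| ≤ δ := by
      rw [← sub_div, abs_div, abs_of_pos ha, div_le_iff₀ ha]
      exact not_lt.1 hωB
    rw [indicator_of_notMem hωB, add_zero]
    by_cases hωA : ω ∈ A
    · simpa [indicator_of_mem hωA] using hgδ _ _ hUV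
    have hUa : |U ω / a| ≤ ρ := by
      rw [abs_div, abs_of_pos ha, div_le_iff₀ ha]
      exact not_lt.1 hωA
    have hVa : |V ω / a| ≤ R := by
      have := abs_sub_abs_le_abs_sub (V ω / a) (U ω / a)
      rw [abs_sub_comm] at this
      linarith
    rw [hgR _ (by linarith [abs_nonneg (U ω / a - V ω / a)]), hgR _ hVa, sub_self, abs_zero]
    exact hAnn
  have hAi : Integrable (A.indicator fun _ => ε) P := (integrable_const ε).indicator hA
  have hBi : Integrable (B.indicator fun _ => (1 : ℝ)) P := (integrable_const _).indicator hB
  calc ∫ ω, |g (U ω / a) - g (V ω / a)| ∂P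
      ≤ ∫ ω, (A.indicator (fun _ => ε) ω + B.indicator (fun _ => (1 : ℝ)) ω) ∂P :=
        integral_mono_of_nonneg (Eventually.of_forall fun _ => abs_nonneg _) (hAi.add hBi)
          (Eventually.of_forall hpt)
    _ = ε * P.real A + P.real B := by
        rw [integral_add hAi hBi, integral_indicator_const _ hA, integral_indicator_const _ hB,
          smul_eq_mul, smul_eq_mul, mul_one, mul_comm]

def absTail (P : Measure Ω) (Y : Ω → ℝ) (u : ℝ) : ℝ := P.real {ω | u < |Y ω|}

theorem absTail_nonneg (Y : Ω → ℝ) (u : ℝ) : 0 ≤ absTail P Y u := measureReal_nonneg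

theorem absTail_antitone [IsFiniteMeasure P] (Y : Ω → ℝ) : Antitone (absTail P Y) :=
  fun _ _ huv => measureReal_mono fun _ hω => huv.trans_lt hω

theorem RegVarOf.absTail_pos [IsFiniteMeasure P] {Y : Ω → ℝ} {α : ℝ} (hreg : RegVarOf P Y α)
    (u : ℝ) : 0 < absTail P Y u := by
  obtain ⟨L, -, hLpos, -, hTL⟩ := hreg
  have h1 : 0 < absTail P Y (max u 1) := by
    rw [absTail, Measure.real, hTL _ (by positivity)]
    exact mul_pos (Real.rpow_pos_of_pos (by positivity) _) (hLpos _ (by positivity))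
  exact h1.trans_le (absTail_antitone Y (le_max_left u 1))

theorem RegVarOf.exists_potter_bound [IsProbabilityMeasure P] {Y : Ω → ℝ} {α : ℝ}
    (hreg : RegVarOf P Y α) (hα : 0 ≤ α) :
    ∃ X₀ > 0, ∃ C, ∀ x y, 0 < y → y ≤ x → X₀ ≤ x →
      absTail P Y y ≤ C * (x / y) ^ (1 + α) * absTail P Y x := by
  set T := absTail P Y
  have hTX : ∀ X, 0 < T X := hreg.absTail_pos
  obtain ⟨L, -, hLpos, hL, hTL⟩ := hreg
  obtain ⟨X₀, hX₀, hdbl⟩ := exists_doubling_of_slowlyVaryingAt (T := T) hL hLpos hTL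
  have hchain {x y : ℝ} (hy : X₀ ≤ y) (hyx : y ≤ x) :
      T y ≤ 2 ^ (1 + α) * (x / y) ^ (1 + α) * T x :=
    (absTail_antitone Y).le_mul_rpow_mul_of_doubling (absTail_nonneg Y) (by linarith) hX₀ hdbl
      hy hyx
  -- Below `X₀` the chaining bound is replaced by the trivial bound `T y ≤ 1`.
  set C := 2 ^ (1 + α) / T X₀
  have hC0 : 0 ≤ C := (div_pos (by positivity) (hTX X₀)).le
  have hC : 2 ^ (1 + α) ≤ C := le_div_self (by positivity) (hTX X₀) measureReal_le_one
  refine ⟨X₀, hX₀, C, fun x y hy hyx hx => ?_⟩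
  have hTx := (hTX x).le
  have hx0 : 0 < x := hy.trans_le hyx
  rcases le_or_gt X₀ y with hXy | hyX
  · exact (hchain hXy hyx).trans
      (mul_le_mul_of_nonneg_right (mul_le_mul_of_nonneg_right hC
        (Real.rpow_nonneg (div_nonneg hx0.le hy.le) _)) hTx)
  · have hX₀x : T X₀ / 2 ^ (1 + α) ≤ (x / X₀) ^ (1 + α) * T x := by
      rw [div_le_iff₀' (by positivity), ← mul_assoc]
      exact hchain le_rfl hx
    have hyX' : (x / X₀) ^ (1 + α) ≤ (x / y) ^ (1 + α) :=
      Real.rpow_le_rpow (by positivity) (div_le_div_of_nonneg_left hx0.le hy hyX.le)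
        (by linarith)
    calc T y ≤ 1 := measureReal_le_one
      _ = C * (T X₀ / 2 ^ (1 + α)) := by
        have := (hTX X₀).ne'
        simp only [C]
        field_simp
      _ ≤ C * ((x / y) ^ (1 + α) * T x) := by
        gcongr
        exact hX₀x.trans (mul_le_mul_of_nonneg_right hyX' hTx)
      _ = C * (x / y) ^ (1 + α) * T x := by ring

theorem RegVarOf.tendsto_mul_mul_absTail_div [IsProbabilityMeasure P] {Y : Ω → ℝ} {α : ℝ}
    (hreg : RegVarOf P Y α) (hα : 0 ≤ α) {a k l : ℕ → ℝ}
    (ha : Tendsto (fun n => n * absTail P Y (a n)) atTop (𝓝 1))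
    (hkl : Tendsto (fun n => k n * l n ^ (2 + α) / n) atTop (𝓝 0)) (hk : ∀ n, 0 ≤ k n)
    (hl : ∀ n, 1 ≤ l n) {δ : ℝ} (hδ0 : 0 < δ) (hδ1 : δ ≤ 1) :
    Tendsto (fun n => k n * l n * absTail P Y (δ * a n / l n)) atTop (𝓝 0) := by
  obtain ⟨X₀, hX₀, C, hC⟩ := hreg.exists_potter_bound hα
  have hTa : Tendsto (fun n => absTail P Y (a n)) atTop (𝓝 0) := by
    have h := ha.mul tendsto_inv_atTop_nhds_zero_nat
    rw [one_mul] at h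
    refine h.congr' ?_
    filter_upwards [eventually_ne_atTop 0] with n hn
    field_simp
  have ha_inf := (absTail_antitone Y).tendsto_atTop_of_tendsto_zero hreg.absTail_pos hTa
  have hlim : Tendsto (fun n => C / δ ^ (1 + α) * (k n * l n ^ (2 + α) / n) *
      (n * absTail P Y (a n))) atTop (𝓝 0) := by
    simpa using (hkl.const_mul _).mul ha
  refine squeeze_zero' (Eventually.of_forall fun n =>
    mul_nonneg (mul_nonneg (hk n) (by linarith [hl n])) (absTail_nonneg Y _)) ?_ hlim
  filter_upwards [ha_inf.eventually_ge_atTop X₀, eventually_ne_atTop 0] with n han hn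
  have ha0 : 0 < a n := hX₀.trans_le han
  have hl0 : 0 < l n := one_pos.trans_le (hl n)
  have hpow : l n * l n ^ (1 + α) = l n ^ (2 + α) := by
    rw [show (2 : ℝ) + α = 1 + (1 + α) by ring, Real.rpow_add hl0 1 (1 + α), Real.rpow_one]
  have hbound := hC (a n) (δ * a n / l n) (by positivity)
    (div_le_of_le_mul₀ hl0.le ha0.le (by nlinarith [hl n])) han
  rw [show a n / (δ * a n / l n) = l n / δ by field_simp, Real.div_rpow hl0.le hδ0.le] at hbound
  calc k n * l n * absTail P Y (δ * a n / l n)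
      ≤ k n * l n * (C * (l n ^ (1 + α) / δ ^ (1 + α)) * absTail P Y (a n)) := by
        gcongr
        exact mul_nonneg (hk n) hl0.le
    _ = C / δ ^ (1 + α) * (k n * l n ^ (2 + α) / n) * (n * absTail P Y (a n)) := by
        rw [← hpow]
        field_simp

theorem IsStationarySeq.identDistrib {X : ℕ → Ω → ℝ} (hstat : IsStationarySeq P X)
    (hX : ∀ i, Measurable (X i)) (i : ℕ) : IdentDistrib (X i) (X 0) P P where
  aemeasurable_fst := (hX i).aemeasurable
  aemeasurable_snd := (hX 0).aemeasurable
  map_eq := by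
    have hshift : ∀ m, Measurable fun ω (j : ℕ) => X (j + m) ω :=
      fun m => measurable_pi_lambda _ fun j => hX (j + m)
    have h := congrArg (Measure.map fun p : ℕ → ℝ => p 0) (hstat i)
    rw [Measure.map_map (measurable_pi_apply 0) (hshift i),
      Measure.map_map (measurable_pi_apply 0) (by simpa using hshift 0)] at h
    simpa [Function.comp_def] using h

theorem measureReal_lt_abs_sum_le [IsFiniteMeasure P] {ι : Type*} {X : ι → Ω → ℝ}
    {Y : Ω → ℝ} {s : Finset ι} (hX : ∀ i ∈ s, IdentDistrib (X i) Y P P) {m : ℕ}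
    (hs : s.card ≤ m) {x : ℝ} (hx : 0 ≤ x) :
    P.real {ω | x < |∑ i ∈ s, X i ω|} ≤ m * absTail P Y (x / m) := by
  have hsub : {ω | x < |∑ i ∈ s, X i ω|} ⊆ ⋃ i ∈ s, {ω | x / m < |X i ω|} := by
    intro ω (hω : x < |∑ i ∈ s, X i ω|)
    by_contra hcon
    simp only [mem_iUnion, mem_ofPred_eq, not_exists, not_lt] at hcon
    have hmx : (m : ℝ) * (x / m) ≤ x := by
      rcases eq_or_ne m 0 with rfl | hm
      · simpa using hx
      · rw [mul_div_cancel₀ _ (by exact_mod_cast hm)]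
    have : |∑ i ∈ s, X i ω| ≤ x :=
      calc |∑ i ∈ s, X i ω| ≤ ∑ i ∈ s, |X i ω| := Finset.abs_sum_le_sum_abs _ _
        _ ≤ ∑ _i ∈ s, x / m := Finset.sum_le_sum hcon
        _ = s.card * (x / m) := by rw [Finset.sum_const, nsmul_eq_mul]
        _ ≤ m * (x / m) := by gcongr
        _ ≤ x := hmx
    linarith
  have hset : MeasurableSet {z : ℝ | x / m < |z|} :=
    measurableSet_lt measurable_const measurable_abs
  calc P.real {ω | x < |∑ i ∈ s, X i ω|} ≤ ∑ i ∈ s, P.real {ω | x / m < |X i ω|} :=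
        (measureReal_mono hsub (measure_ne_top P _)).trans (measureReal_biUnion_finset_le _ _)
    _ = s.card * absTail P Y (x / m) := by
        rw [← nsmul_eq_mul, ← Finset.sum_const]
        refine Finset.sum_congr rfl fun i hi => ?_
        simp only [absTail, measureReal_def]
        exact congrArg ENNReal.toReal ((hX i hi).measure_mem_eq hset)
    _ ≤ m * absTail P Y (x / m) := by gcongr; exact absTail_nonneg Y _

theorem measurable_pS {X : ℕ → Ω → ℝ} (hX : ∀ i, Measurable (X i)) (m : ℕ) :
    Measurable (pS X m) :=
  Finset.measurable_sum _ fun i _ => hX i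

theorem IsStationarySeq.measureReal_lt_abs_pS_sub_pS_le [IsFiniteMeasure P] {X : ℕ → Ω → ℝ}
    (hstat : IsStationarySeq P X) (hX : ∀ i, Measurable (X i)) (m l : ℕ) {x : ℝ}
    (hx : 0 ≤ x) :
    P.real {ω | x < |pS X m ω - pS X (m - l) ω|} ≤ l * absTail P (X 0) (x / l) := by
  have hsum (ω : Ω) : pS X m ω - pS X (m - l) ω = ∑ i ∈ Finset.Ico (m - l) m, X i ω :=
    (Finset.sum_Ico_eq_sub _ (Nat.sub_le _ _)).symm
  simp only [hsum]
  exact measureReal_lt_abs_sum_le (fun i _ => hstat.identDistrib hX i)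
    (by simp only [Nat.card_Ico]; omega) hx

theorem IsStationarySeq.tendsto_mul_measureReal_lt_abs_pS_sub_pS [IsProbabilityMeasure P]
    {X : ℕ → Ω → ℝ} (hstat : IsStationarySeq P X) (hX : ∀ i, Measurable (X i)) {α : ℝ}
    (hreg : RegVarOf P (X 0) α) (hα : 0 ≤ α) {a k : ℕ → ℝ} {r l : ℕ → ℕ} (ha0 : ∀ n, 0 ≤ a n)
    (ha : Tendsto (fun n => n * absTail P (X 0) (a n)) atTop (𝓝 1))
    (hkl : Tendsto (fun n => k n * (l n : ℝ) ^ (2 + α) / n) atTop (𝓝 0)) (hk : ∀ n, 0 ≤ k n)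
    (hl : ∀ n, 1 ≤ l n) {δ : ℝ} (hδ0 : 0 < δ) (hδ1 : δ ≤ 1) :
    Tendsto (fun n => k n * P.real {ω | δ * a n < |pS X (r n) ω - pS X (r n - l n) ω|})
      atTop (𝓝 0) := by
  refine squeeze_zero (fun n => mul_nonneg (hk n) measureReal_nonneg) (fun n => ?_)
    (hreg.tendsto_mul_mul_absTail_div hα ha hkl hk (fun n => by exact_mod_cast hl n) hδ0 hδ1)
  rw [mul_assoc]
  exact mul_le_mul_of_nonneg_left
    (hstat.measureReal_lt_abs_pS_sub_pS_le hX _ _ (mul_nonneg hδ0.le (ha0 n))) (hk n)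

end Probability

theorem CKplus.exists_integral_abs_exp_neg_sub_le {f : ℝ → ℝ} (hf : CKplus f)
    {Ω : Type*} [MeasurableSpace Ω] (P : Measure Ω) [IsFiniteMeasure P] :
    ∃ ρ > 0, ∀ ε > 0, ∃ δ > 0, δ ≤ 1 ∧ ∀ {U V : Ω → ℝ}, Measurable U → Measurable V →
      ∀ {a : ℝ}, 0 < a → ∫ ω, |Real.exp (-f (U ω / a)) - Real.exp (-f (V ω / a))| ∂P
        ≤ ε * P.real {ω | ρ * a < |U ω|} + P.real {ω | δ * a < |U ω - V ω|} := by
  obtain ⟨hfc, hf0, -, ⟨R, hR, hfR⟩, ⟨lp, hlp⟩, ⟨lm, hlm⟩⟩ := hf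
  set g : ℝ → ℝ := fun x => Real.exp (-f x)
  have hg1 (x y : ℝ) : |g x - g y| ≤ 1 := by
    have hg (z : ℝ) : 0 < g z ∧ g z ≤ 1 :=
      ⟨Real.exp_pos _, Real.exp_le_one_iff.2 (neg_nonpos.2 (hf0 z))⟩
    rw [abs_sub_le_iff]
    constructor <;> linarith [hg x, hg y]
  have hgR (z : ℝ) (hz : |z| ≤ R) : g z = g 0 := by
    simp [g, hfR z hz, hfR 0 (by simpa using hR.le)]
  have hgUC : UniformContinuous g :=
    (Real.continuous_exp.comp hfc.neg).uniformContinuous_of_tendsto_atTop_atBot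
      ((Real.continuous_exp.tendsto _).comp hlp.neg) ((Real.continuous_exp.tendsto _).comp hlm.neg)
  refine ⟨R / 2, half_pos hR, fun ε hε => ?_⟩
  obtain ⟨δ, hδ, hgδ⟩ := Metric.uniformContinuous_iff.1 hgUC ε hε
  have hδ' : min (δ / 2) (min (R / 2) 1) ≤ δ / 2 := min_le_left _ _
  have hδR : min (δ / 2) (min (R / 2) 1) ≤ R / 2 := (min_le_right _ _).trans (min_le_left _ _)
  refine ⟨min (δ / 2) (min (R / 2) 1), by positivity, (min_le_right _ _).trans (min_le_right _ _),
    fun hU hV a ha => integral_abs_sub_comp_div_le hU hV ha hε.le (by linarith) hg1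
      (fun x y hxy => ?_) hgR⟩
  have h := @hgδ x y (by rw [Real.dist_eq]; linarith)
  exact (Real.dist_eq _ _ ▸ h).le

theorem stmt8_general
    {Ω : Type*} [MeasurableSpace Ω] (P : Measure Ω) [IsProbabilityMeasure P]
    (X : ℕ → Ω → ℝ) (hXmeas : ∀ i, Measurable (X i))
    (hstat : IsStationarySeq P X)
    (α : ℝ) (hα0 : 0 < α)
    (hreg : RegVarOf P (X 0) α)
    (a : ℕ → ℝ) (hapos : ∀ n, 0 < a n)
    (hna : Tendsto (fun n : ℕ => (n : ℝ) * (P {ω | a n < |X 0 ω|}).toReal) atTop (nhds 1))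
    (r : ℕ → ℕ)
    (cp cm : ℝ)
    (hLD : ∀ x : ℝ, 0 < x →
      Tendsto (fun n : ℕ => ((n / r n : ℕ) : ℝ) *
        (P {ω | x * a n < pS X (r n) ω}).toReal) atTop (nhds (cp * x ^ (-α))) ∧
      Tendsto (fun n : ℕ => ((n / r n : ℕ) : ℝ) *
        (P {ω | pS X (r n) ω < -(x * a n)}).toReal) atTop (nhds (cm * x ^ (-α))))
    (t : ℝ) (ht1 : t < 1)
    (hkn : Tendsto (fun n : ℕ => ((n / r n : ℕ) : ℝ) / (n : ℝ) ^ t) atTop (nhds 0))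
    (q : ℝ) (hq : q = (min (1 / α) ((1 - t) / (1 + α))) / 2)
    (l : ℕ → ℕ) (hlpos : ∀ n, 1 ≤ l n)
    (hl : Tendsto (fun n : ℕ => (l n : ℝ) / (n : ℝ) ^ q) atTop (nhds 1)) :
    ∀ f : ℝ → ℝ, CKplus f →
      Tendsto (fun n : ℕ => ((n / r n : ℕ) : ℝ) *
          ∫ ω, |Real.exp (- f (pS X (r n) ω / a n))
            - Real.exp (- f (pS X (r n - l n) ω / a n))| ∂P)
        atTop (nhds 0) := by
  rintro f hf
  obtain ⟨ρ, hρ, hmod⟩ := hf.exists_integral_abs_exp_neg_sub_le P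
  set k : ℕ → ℝ := fun n => ((n / r n : ℕ) : ℝ)
  have hk (n : ℕ) : 0 ≤ k n := Nat.cast_nonneg _
  have hkl := tendsto_mul_rpow_div_natCast hkn hl (fun n => Nat.cast_nonneg _)
    (hq ▸ add_half_min_mul_lt_one hα0 ht1)
  refine tendsto_zero_of_forall_le_mul_add
    (fun n => mul_nonneg (hk n) (integral_nonneg fun _ => abs_nonneg _))
    (b := fun n => k n * P.real {ω | ρ * a n < pS X (r n) ω} +
      k n * P.real {ω | pS X (r n) ω < -(ρ * a n)})
    ((hLD ρ hρ).1.add (hLD ρ hρ).2) fun ε hε => ?_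
  obtain ⟨δ, hδ0, hδ1, hδ⟩ := hmod ε hε
  refine ⟨_, hstat.tendsto_mul_measureReal_lt_abs_pS_sub_pS (r := r) hXmeas hreg hα0.le
    (fun n => (hapos n).le) hna hkl hk hlpos hδ0 hδ1, fun n => ?_⟩
  have hint := hδ (measurable_pS hXmeas (r n)) (measurable_pS hXmeas (r n - l n)) (hapos n)
  have hA := measureReal_lt_abs_le (P := P) (pS X (r n)) (ρ * a n)
  calc _ ≤ k n * (ε * (P.real {ω | ρ * a n < pS X (r n) ω} +
          P.real {ω | pS X (r n) ω < -(ρ * a n)}) +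
          P.real {ω | δ * a n < |pS X (r n) ω - pS X (r n - l n) ω|}) := by
        gcongr
        exact hint.trans (by gcongr)
    _ = _ := by ring

/-- Under the hypotheses of Proposition 4.1 (strict stationarity,
regular variation with α ∈ (0,2), LD, k_n = o(n^t), l_n ~ n^q with
q = (1/2)·min{1/α, (1−t)/(1+α)}), for every f of class C_K⁺,
k_n · E|exp(−f(a_n⁻¹ S_{r_n})) − exp(−f(a_n⁻¹ S_{r_n − l_n}))| → 0. -/
theorem stmt8
    {Ω : Type*} [MeasurableSpace Ω] (P : Measure Ω) [IsProbabilityMeasure P]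
    (X : ℕ → Ω → ℝ) (hXmeas : ∀ i, Measurable (X i))
    (hstat : IsStationarySeq P X)
    (α : ℝ) (hα0 : 0 < α) (hα2 : α < 2)
    (hreg : RegVarOf P (X 0) α)
    (a : ℕ → ℝ) (hapos : ∀ n, 0 < a n)
    (hna : Tendsto (fun n : ℕ => (n : ℝ) * (P {ω | a n < |X 0 ω|}).toReal) atTop (nhds 1))
    (r : ℕ → ℕ) (hrpos : ∀ n, 1 ≤ r n)
    (hrinf : Tendsto r atTop atTop)
    (hrn : Tendsto (fun n : ℕ => (r n : ℝ) / (n : ℝ)) atTop (nhds 0))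
    (cp cm : ℝ) (hcp : 0 ≤ cp) (hcm : 0 ≤ cm)
    (hLD : ∀ x : ℝ, 0 < x →
      Tendsto (fun n : ℕ => ((n / r n : ℕ) : ℝ) *
        (P {ω | x * a n < pS X (r n) ω}).toReal) atTop (nhds (cp * x ^ (-α))) ∧
      Tendsto (fun n : ℕ => ((n / r n : ℕ) : ℝ) *
        (P {ω | pS X (r n) ω < -(x * a n)}).toReal) atTop (nhds (cm * x ^ (-α))))
    (t : ℝ) (ht0 : 0 < t) (ht1 : t < 1)
    (hkn : Tendsto (fun n : ℕ => ((n / r n : ℕ) : ℝ) / (n : ℝ) ^ t) atTop (nhds 0))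
    (q : ℝ) (hq : q = (min (1 / α) ((1 - t) / (1 + α))) / 2)
    (l : ℕ → ℕ) (hlpos : ∀ n, 1 ≤ l n)
    (hl : Tendsto (fun n : ℕ => (l n : ℝ) / (n : ℝ) ^ q) atTop (nhds 1)) :
    ∀ f : ℝ → ℝ, CKplus f →
      Tendsto (fun n : ℕ => ((n / r n : ℕ) : ℝ) *
          ∫ ω, |Real.exp (- f (pS X (r n) ω / a n))
            - Real.exp (- f (pS X (r n - l n) ω / a n))| ∂P)
        atTop (nhds 0) :=
  stmt8_general P X hXmeas hstat α hα0 hreg a hapos hna r cp cm hLD t ht1 hkn q hq l hlpos hl
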